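/- Let F be a field of characteristic 2 and A a (possibly nonunital) commutative associative F-algebra. Then the bar differential b' is a derivation with respect to the shuffle product on T(A): b'(x · y) = b'(x) · y + x · b'(y) for all x, y ∈ T(A). Consequently the bar construction of a commutative algebra, equipped with the shuffle product, is a commutative differential graded algebra. -/

import Mathlib

open scoped TensorProduct
open PiTensorProduct DirectSum

/-- Multiplication of the two adjacent entries at position `i` in a tensor word. -/
def mulAt {A : Type*} [Mul A] {n : ℕ} (i : Fin n) (a : Fin (n + 1) → A) : Fin n → A :=
  fun j =>
    if (j : ℕ) < (i : ℕ) then a j.castSucc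
    else if (j : ℕ) = (i : ℕ) then a i.castSucc * a i.succ
    else a j.succ

/-- A `(p,q)`-shuffle: a permutation of `{1, …, p+q}` which is increasing on the first `p`
elements and on the last `q` elements. -/
def IsShuffle (p q : ℕ) (σ : Equiv.Perm (Fin (p + q))) : Prop :=
  (∀ i j : Fin (p + q), (i : ℕ) < p → (j : ℕ) < p → i < j → σ i < σ j) ∧
  (∀ i j : Fin (p + q), p ≤ (i : ℕ) → p ≤ (j : ℕ) → i < j → σ i < σ j)

instance (p q : ℕ) (σ : Equiv.Perm (Fin (p + q))) : Decidable (IsShuffle p q σ) := by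
  unfold IsShuffle; infer_instance

theorem Equiv.Perm.apply_inv_self {α : Type*} (f : Equiv.Perm α) (x : α) : f (f⁻¹ x) = x :=
  Equiv.apply_symm_apply f x

theorem Equiv.Perm.inv_apply_self {α : Type*} (f : Equiv.Perm α) (x : α) : f⁻¹ (f x) = x :=
  Equiv.symm_apply_apply f x

/-! ### Auxiliary combinatorial material -/

section Aux

open Equiv

/-- value-level shuffle predicate -/
def ShP (p : ℕ) {k : ℕ} (f : Equiv.Perm (Fin k)) : Prop :=
  (∀ x y : Fin k, (x:ℕ) < p → (y:ℕ) < p → (x:ℕ) < (y:ℕ) → ((f x):ℕ) < ((f y):ℕ)) ∧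
  (∀ x y : Fin k, p ≤ (x:ℕ) → p ≤ (y:ℕ) → (x:ℕ) < (y:ℕ) → ((f x):ℕ) < ((f y):ℕ))

instance (p k : ℕ) (f : Equiv.Perm (Fin k)) : Decidable (ShP p f) := by
  unfold ShP; infer_instance

theorem succAbove_val {n : ℕ} (j : Fin (n+1)) (k : Fin n) :
    ((j.succAbove k : Fin (n+1)) : ℕ) = if (k:ℕ) < (j:ℕ) then (k:ℕ) else (k:ℕ)+1 := by
  rw [Fin.succAbove]
  rcases lt_or_ge (k.castSucc) j with h | h
  · rw [if_pos h, if_pos (by simpa [Fin.lt_def] using h)]; rfl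
  · rw [if_neg (not_lt.2 h), if_neg (by simpa [Fin.lt_def, Fin.le_def, not_lt] using h)]; rfl

/-- transport a permutation along an equality of sizes -/
def cperm {m k : ℕ} (h : m = k) (σ : Equiv.Perm (Fin m)) : Equiv.Perm (Fin k) :=
  ((finCongr h).symm.trans σ).trans (finCongr h)

theorem cperm_val {m k : ℕ} (h : m = k) (σ : Equiv.Perm (Fin m)) (x : Fin k) :
    ((cperm h σ x) : ℕ) = (σ (Fin.cast h.symm x) : ℕ) := rfl

theorem cperm_inv {m k : ℕ} (h : m = k) (σ : Equiv.Perm (Fin m)) :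
    (cperm h σ)⁻¹ = cperm h σ⁻¹ := rfl

theorem cperm_cperm {m k : ℕ} (h : m = k) (σ : Equiv.Perm (Fin m)) :
    cperm h.symm (cperm h σ) = σ := by
  ext x; rfl

theorem cperm_cperm' {m k : ℕ} (h : m = k) (σ : Equiv.Perm (Fin k)) :
    cperm h (cperm h.symm σ) = σ := by
  ext x; rfl

theorem cperm_ShP {m k : ℕ} (h : m = k) (σ : Equiv.Perm (Fin m)) (P : ℕ) (hσ : ShP P σ) :
    ShP P (cperm h σ) := by
  obtain ⟨h1, h2⟩ := hσ
  exact ⟨fun x y hx hy hxy => h1 (Fin.cast h.symm x) (Fin.cast h.symm y) hx hy hxy,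
    fun x y hx hy hxy => h2 (Fin.cast h.symm x) (Fin.cast h.symm y) hx hy hxy⟩

theorem cperm_ShP_iff {m k : ℕ} (h : m = k) (σ : Equiv.Perm (Fin m)) (P : ℕ) :
    ShP P (cperm h σ) ↔ ShP P σ := by
  constructor
  · intro hs
    have := cperm_ShP h.symm _ P hs
    rwa [cperm_cperm] at this
  · exact cperm_ShP h σ P

theorem isShuffle_iff_ShP (p q : ℕ) (σ : Equiv.Perm (Fin (p+q))) :
    IsShuffle p q σ ↔ ShP p σ := by
  unfold IsShuffle ShP
  simp only [Fin.lt_def]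

/-- expand a permutation by inserting input `w` mapping to output `v`. -/
def expandPerm {n : ℕ} (w v : Fin (n+1)) (τ : Equiv.Perm (Fin n)) : Equiv.Perm (Fin (n+1)) :=
  (finSuccEquiv' w).trans (τ.optionCongr.trans (finSuccEquiv' v).symm)

theorem expandPerm_at {n : ℕ} (w v : Fin (n+1)) (τ : Equiv.Perm (Fin n)) :
    expandPerm w v τ w = v := by
  simp [expandPerm, finSuccEquiv'_at]

theorem expandPerm_succAbove {n : ℕ} (w v : Fin (n+1)) (τ : Equiv.Perm (Fin n)) (k : Fin n) :
    expandPerm w v τ (w.succAbove k) = v.succAbove (τ k) := by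
  simp [expandPerm, finSuccEquiv'_succAbove, finSuccEquiv'_symm_some]

theorem expandPerm_inv {n : ℕ} (w v : Fin (n+1)) (τ : Equiv.Perm (Fin n)) :
    (expandPerm w v τ)⁻¹ = expandPerm v w τ⁻¹ := by
  ext x
  rw [Equiv.Perm.inv_def]
  simp [expandPerm, Equiv.symm_trans_apply]
  rfl

/-- collapse a permutation by removing input `w` (and output `σ w`). -/
def collapsePerm {n : ℕ} (w : Fin (n+1)) (σ : Equiv.Perm (Fin (n+1))) : Equiv.Perm (Fin n) :=
  Equiv.removeNone ((finSuccEquiv' w).symm.trans (σ.trans (finSuccEquiv' (σ w))))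

theorem collapsePerm_char {n : ℕ} (w : Fin (n+1)) (σ : Equiv.Perm (Fin (n+1))) (k : Fin n) :
    (σ w).succAbove (collapsePerm w σ k) = σ (w.succAbove k) := by
  have h1 : ((finSuccEquiv' w).symm.trans (σ.trans (finSuccEquiv' (σ w)))) (some k)
      = finSuccEquiv' (σ w) (σ (w.succAbove k)) := by
    simp [Equiv.trans_apply, finSuccEquiv'_symm_some]
  have hne : σ (w.succAbove k) ≠ σ w := by
    intro h
    exact Fin.succAbove_ne w k (σ.injective h)
  obtain ⟨m, hm⟩ : ∃ m, finSuccEquiv' (σ w) (σ (w.succAbove k)) = some m := by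
    rcases h : finSuccEquiv' (σ w) (σ (w.succAbove k)) with _ | m
    · exfalso; apply hne
      have := congrArg (finSuccEquiv' (σ w)).symm h
      simpa [finSuccEquiv'_symm_none] using this
    · exact ⟨m, rfl⟩
  have h2 : some (collapsePerm w σ k) = some m := by
    rw [collapsePerm]
    rw [Equiv.removeNone_some _ ⟨m, h1.trans hm⟩, h1, hm]
  have h3 : collapsePerm w σ k = m := by injection h2
  rw [h3]
  have := congrArg (finSuccEquiv' (σ w)).symm hm
  rw [Equiv.symm_apply_apply, finSuccEquiv'_symm_some] at this
  exact this.symm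

theorem expandPerm_collapsePerm {n : ℕ} (w : Fin (n+1)) (σ : Equiv.Perm (Fin (n+1))) :
    expandPerm w (σ w) (collapsePerm w σ) = σ := by
  ext x
  by_cases h : x = w
  · subst h; rw [expandPerm_at]
  · obtain ⟨k, rfl⟩ := Fin.exists_succAbove_eq (Ne.symm (Ne.symm h))
    rw [expandPerm_succAbove, collapsePerm_char]

theorem collapsePerm_expandPerm {n : ℕ} (w v : Fin (n+1)) (τ : Equiv.Perm (Fin n)) :
    collapsePerm w (expandPerm w v τ) = τ := by
  ext k
  have h := collapsePerm_char w (expandPerm w v τ) k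
  rw [expandPerm_at, expandPerm_succAbove] at h
  exact congrArg Fin.val (Fin.succAbove_right_injective (p := v) h)

theorem sa_lt {piv v1 v2 : ℕ}
    (h : (if v1 < piv then v1 else v1+1) < (if v2 < piv then v2 else v2+1)) :
    v1 < v2 := by split_ifs at h <;> omega

theorem sa_mono {piv t1 t2 : ℕ} (h : t1 < t2) :
    (if t1 < piv then t1 else t1+1) < (if t2 < piv then t2 else t2+1) := by
  split_ifs <;> omega

/-- adjacency for the left block -/
theorem adj_left {n P : ℕ} (σ : Equiv.Perm (Fin (n+1))) (hσ : ShP P σ)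
    (v₁ v₂ : Fin (n+1)) (hv : (v₂:ℕ) = (v₁:ℕ)+1)
    (h1 : ((σ⁻¹ v₁ : Fin (n+1)) :ℕ) < P) (h2 : ((σ⁻¹ v₂ : Fin (n+1)):ℕ) < P) :
    ((σ⁻¹ v₂ : Fin (n+1)):ℕ) = ((σ⁻¹ v₁ : Fin (n+1)):ℕ) + 1 := by
  set u := σ⁻¹ v₁ with hu
  set w := σ⁻¹ v₂ with hw
  have hsu : σ u = v₁ := σ.apply_symm_apply v₁
  have hsw : σ w = v₂ := σ.apply_symm_apply v₂
  have huw : (u:ℕ) < (w:ℕ) := by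
    rcases lt_trichotomy (u:ℕ) (w:ℕ) with h | h | h
    · exact h
    · exfalso; have : u = w := Fin.ext h
      rw [this, hsw] at hsu; omega
    · have := hσ.1 w u h2 h1 h
      rw [hsu, hsw] at this; omega
  by_contra hne
  have hmid : (u:ℕ)+1 < (w:ℕ) := by omega
  set z : Fin (n+1) := ⟨(u:ℕ)+1, by omega⟩ with hz
  have hz1 := hσ.1 u z h1 (by simp [hz]; omega) (by simp [hz])
  have hz2 := hσ.1 z w (by simp [hz]; omega) h2 (by simp [hz]; omega)
  rw [hsu] at hz1; rw [hsw] at hz2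
  simp at hz1 hz2
  omega

/-- adjacency for the right block -/
theorem adj_right {n P : ℕ} (σ : Equiv.Perm (Fin (n+1))) (hσ : ShP P σ)
    (v₁ v₂ : Fin (n+1)) (hv : (v₂:ℕ) = (v₁:ℕ)+1)
    (h1 : P ≤ ((σ⁻¹ v₁ : Fin (n+1)) :ℕ)) (h2 : P ≤ ((σ⁻¹ v₂ : Fin (n+1)):ℕ)) :
    ((σ⁻¹ v₂ : Fin (n+1)):ℕ) = ((σ⁻¹ v₁ : Fin (n+1)):ℕ) + 1 := by
  set u := σ⁻¹ v₁ with hu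
  set w := σ⁻¹ v₂ with hw
  have hsu : σ u = v₁ := σ.apply_symm_apply v₁
  have hsw : σ w = v₂ := σ.apply_symm_apply v₂
  have huw : (u:ℕ) < (w:ℕ) := by
    rcases lt_trichotomy (u:ℕ) (w:ℕ) with h | h | h
    · exact h
    · exfalso; have : u = w := Fin.ext h
      rw [this, hsw] at hsu; omega
    · have := hσ.2 w u h2 h1 h
      rw [hsu, hsw] at this; omega
  by_contra hne
  have hmid : (u:ℕ)+1 < (w:ℕ) := by omega
  set z : Fin (n+1) := ⟨(u:ℕ)+1, by omega⟩ with hz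
  have hz1 := hσ.2 u z h1 (by simp [hz]; omega) (by simp [hz])
  have hz2 := hσ.2 z w (by simp [hz]; omega) h2 (by simp [hz]; omega)
  rw [hsu] at hz1; rw [hsw] at hz2
  simp at hz1 hz2
  omega

/-- collapsing at an input in the left block preserves shuffles -/
theorem collapse_ShP_left {n p : ℕ} (σ : Equiv.Perm (Fin (n+1))) (hσ : ShP (p+1) σ)
    (w : Fin (n+1)) (hw : (w:ℕ) ≤ p) : ShP p (collapsePerm w σ) := by
  have key : ∀ x y : Fin n, (x:ℕ) < (y:ℕ) →
      ((σ (w.succAbove x) : Fin (n+1)):ℕ) < ((σ (w.succAbove y)):ℕ) →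
      ((collapsePerm w σ x : Fin n):ℕ) < ((collapsePerm w σ y):ℕ) := by
    intro x y _ hlt
    rw [← collapsePerm_char w σ x, ← collapsePerm_char w σ y] at hlt
    rw [succAbove_val (σ w), succAbove_val (σ w)] at hlt
    exact sa_lt hlt
  constructor
  · intro x y hx hy hxy
    apply key x y hxy
    apply hσ.1
    · rw [succAbove_val]; split <;> omega
    · rw [succAbove_val]; split <;> omega
    · rw [succAbove_val, succAbove_val]; split_ifs <;> omega
  · intro x y hx hy hxy
    apply key x y hxy
    apply hσ.2
    · rw [succAbove_val]; split <;> omega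
    · rw [succAbove_val]; split <;> omega
    · rw [succAbove_val, succAbove_val]; split_ifs <;> omega

/-- collapsing at an input in the right block preserves shuffles -/
theorem collapse_ShP_right {n p : ℕ} (σ : Equiv.Perm (Fin (n+1))) (hσ : ShP p σ)
    (w : Fin (n+1)) (hw : p ≤ (w:ℕ)) : ShP p (collapsePerm w σ) := by
  have key : ∀ x y : Fin n, (x:ℕ) < (y:ℕ) →
      ((σ (w.succAbove x) : Fin (n+1)):ℕ) < ((σ (w.succAbove y)):ℕ) →
      ((collapsePerm w σ x : Fin n):ℕ) < ((collapsePerm w σ y):ℕ) := by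
    intro x y _ hlt
    rw [← collapsePerm_char w σ x, ← collapsePerm_char w σ y] at hlt
    rw [succAbove_val (σ w), succAbove_val (σ w)] at hlt
    exact sa_lt hlt
  constructor
  · intro x y hx hy hxy
    apply key x y hxy
    apply hσ.1
    · rw [succAbove_val]; split <;> omega
    · rw [succAbove_val]; split <;> omega
    · rw [succAbove_val, succAbove_val]; split_ifs <;> omega
  · intro x y hx hy hxy
    apply key x y hxy
    apply hσ.2
    · rw [succAbove_val]; split <;> omega
    · rw [succAbove_val]; split <;> omega
    · rw [succAbove_val, succAbove_val]; split_ifs <;> omega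

theorem expand_exists {n : ℕ} (w v : Fin (n+1)) (τ : Equiv.Perm (Fin n)) (x : Fin (n+1))
    (hx : x ≠ w) : ∃ k : Fin n, w.succAbove k = x ∧
      expandPerm w v τ x = v.succAbove (τ k) ∧
      ((k:ℕ) = if (x:ℕ) < (w:ℕ) then (x:ℕ) else (x:ℕ)-1 ) ∧
      ((x:ℕ) = if (k:ℕ) < (w:ℕ) then (k:ℕ) else (k:ℕ)+1) := by
  obtain ⟨k, hk⟩ := Fin.exists_succAbove_eq hx
  refine ⟨k, hk, by rw [← hk, expandPerm_succAbove], ?_, ?_⟩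
  · have := succAbove_val w k
    rw [hk] at this
    split_ifs at this ⊢ <;> omega
  · have := succAbove_val w k
    rw [hk] at this
    split_ifs at this ⊢ <;> omega

set_option linter.unnecessarySeqFocus false in
theorem expand_ShP_left {n p : ℕ} (τ : Equiv.Perm (Fin n)) (hτ : ShP p τ) (w v : Fin (n+1))
    (i' : Fin n) (hi' : (i':ℕ) < p)
    (hw : (w:ℕ) = (i':ℕ)+1) (hv : (v:ℕ) = ((τ i' : Fin n):ℕ)+1) :
    ShP (p+1) (expandPerm w v τ) := by
  have hτle : ∀ k : Fin n, (k:ℕ) ≤ (i':ℕ) → (k:ℕ) < p → ((τ k : Fin n):ℕ) < (v:ℕ) := by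
    intro k hk hkp
    rcases eq_or_lt_of_le hk with h | h
    · have : k = i' := Fin.ext h
      rw [this]; omega
    · have := hτ.1 k i' hkp hi' h; omega
  constructor
  · intro x y hx hy hxy
    by_cases hxw : x = w
    · rw [hxw, expandPerm_at]
      rw [hxw] at hxy
      have hyw : y ≠ w := by intro h; rw [h] at hxy; omega
      obtain ⟨k, _, he, hkval, _⟩ := expand_exists w v τ y hyw
      rw [he, succAbove_val]
      have hk1 : (i':ℕ) < (k:ℕ) := by split_ifs at hkval <;> omega
      have hk2 : (k:ℕ) < p := by split_ifs at hkval <;> omega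
      have := hτ.1 i' k hi' hk2 hk1
      split_ifs <;> omega
    · obtain ⟨kx, _, hex, hkx, _⟩ := expand_exists w v τ x hxw
      by_cases hyw : y = w
      · rw [hyw, expandPerm_at]
        rw [hyw] at hxy
        rw [hex, succAbove_val]
        have hk1 : (kx:ℕ) ≤ (i':ℕ) := by split_ifs at hkx <;> omega
        have hk2 : (kx:ℕ) < p := by omega
        have := hτle kx hk1 hk2
        split_ifs <;> omega
      · obtain ⟨ky, _, hey, hky, _⟩ := expand_exists w v τ y hyw
        rw [hex, hey, succAbove_val, succAbove_val]
        have hkxy : (kx:ℕ) < (ky:ℕ) := by split_ifs at hkx hky <;> omega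
        have hkx2 : (kx:ℕ) < p := by split_ifs at hkx <;> omega
        have hky2 : (ky:ℕ) < p := by split_ifs at hky <;> omega
        exact sa_mono (hτ.1 kx ky hkx2 hky2 hkxy)
  · intro x y hx hy hxy
    have hxw : x ≠ w := by intro h; rw [h] at hx; omega
    have hyw : y ≠ w := by intro h; rw [h] at hy; omega
    obtain ⟨kx, _, hex, hkx, _⟩ := expand_exists w v τ x hxw
    obtain ⟨ky, _, hey, hky, _⟩ := expand_exists w v τ y hyw
    rw [hex, hey, succAbove_val, succAbove_val]
    have hkxy : (kx:ℕ) < (ky:ℕ) := by split_ifs at hkx hky <;> omega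
    have hkx2 : p ≤ (kx:ℕ) := by split_ifs at hkx <;> omega
    have hky2 : p ≤ (ky:ℕ) := by split_ifs at hky <;> omega
    exact sa_mono (hτ.2 kx ky hkx2 hky2 hkxy)

set_option linter.unnecessarySeqFocus false in
theorem expand_ShP_right {n p : ℕ} (τ : Equiv.Perm (Fin n)) (hτ : ShP p τ) (w v : Fin (n+1))
    (j' : Fin n) (hj' : p ≤ (j':ℕ))
    (hw : (w:ℕ) = (j':ℕ)+1) (hv : (v:ℕ) = ((τ j' : Fin n):ℕ)+1) :
    ShP p (expandPerm w v τ) := by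
  have hτle : ∀ k : Fin n, (k:ℕ) ≤ (j':ℕ) → p ≤ (k:ℕ) → ((τ k : Fin n):ℕ) < (v:ℕ) := by
    intro k hk hkp
    rcases eq_or_lt_of_le hk with h | h
    · have : k = j' := Fin.ext h
      rw [this]; omega
    · have := hτ.2 k j' hkp hj' h; omega
  constructor
  · intro x y hx hy hxy
    have hxw : x ≠ w := by intro h; rw [h] at hx; omega
    have hyw : y ≠ w := by intro h; rw [h] at hy; omega
    obtain ⟨kx, _, hex, hkx, _⟩ := expand_exists w v τ x hxw
    obtain ⟨ky, _, hey, hky, _⟩ := expand_exists w v τ y hyw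
    rw [hex, hey, succAbove_val, succAbove_val]
    have hkxy : (kx:ℕ) < (ky:ℕ) := by split_ifs at hkx hky <;> omega
    have hkx2 : (kx:ℕ) < p := by split_ifs at hkx <;> omega
    have hky2 : (ky:ℕ) < p := by split_ifs at hky <;> omega
    exact sa_mono (hτ.1 kx ky hkx2 hky2 hkxy)
  · intro x y hx hy hxy
    by_cases hxw : x = w
    · rw [hxw, expandPerm_at]
      rw [hxw] at hxy
      have hyw : y ≠ w := by intro h; rw [h] at hxy; omega
      obtain ⟨k, _, he, hkval, _⟩ := expand_exists w v τ y hyw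
      rw [he, succAbove_val]
      have hk1 : (j':ℕ) < (k:ℕ) := by split_ifs at hkval <;> omega
      have hk2 : p ≤ (k:ℕ) := by omega
      have := hτ.2 j' k hj' hk2 hk1
      split_ifs <;> omega
    · obtain ⟨kx, _, hex, hkx, _⟩ := expand_exists w v τ x hxw
      by_cases hyw : y = w
      · rw [hyw, expandPerm_at]
        rw [hyw] at hxy
        rw [hex, succAbove_val]
        have hk1 : (kx:ℕ) ≤ (j':ℕ) := by split_ifs at hkx <;> omega
        have hk2 : p ≤ (kx:ℕ) := by split_ifs at hkx <;> omega
        have := hτle kx hk1 hk2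
        split_ifs <;> omega
      · obtain ⟨ky, _, hey, hky, _⟩ := expand_exists w v τ y hyw
        rw [hex, hey, succAbove_val, succAbove_val]
        have hkxy : (kx:ℕ) < (ky:ℕ) := by split_ifs at hkx hky <;> omega
        have hkx2 : p ≤ (kx:ℕ) := by split_ifs at hkx <;> omega
        have hky2 : p ≤ (ky:ℕ) := by split_ifs at hky <;> omega
        exact sa_mono (hτ.2 kx ky hkx2 hky2 hkxy)

theorem swap_apply_val {k : ℕ} (σ : Equiv.Perm (Fin k)) (v₁ v₂ : Fin k) (x : Fin k) :
    ((Equiv.swap v₁ v₂ * σ) x : ℕ) =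
      if x = σ⁻¹ v₁ then (v₂:ℕ) else if x = σ⁻¹ v₂ then (v₁:ℕ) else ((σ x):ℕ) := by
  rw [Equiv.Perm.mul_apply, Equiv.swap_apply_def]
  by_cases h1 : x = σ⁻¹ v₁
  · rw [if_pos h1, if_pos (by rw [h1]; exact Equiv.Perm.apply_inv_self σ v₁)]
  · rw [if_neg h1, if_neg (by intro h; exact h1 (by rw [← h, Equiv.Perm.inv_apply_self]))]
    by_cases h2 : x = σ⁻¹ v₂
    · rw [if_pos h2, if_pos (by rw [h2]; exact Equiv.Perm.apply_inv_self σ v₂)]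
    · rw [if_neg h2, if_neg (by intro h; exact h2 (by rw [← h, Equiv.Perm.inv_apply_self]))]

theorem swap_ShP {k p : ℕ} (σ : Equiv.Perm (Fin k)) (hσ : ShP p σ)
    (v₁ v₂ : Fin k) (hv : (v₂:ℕ) = (v₁:ℕ)+1)
    (hmix : ¬ ((((σ⁻¹ v₁ : Fin k):ℕ) < p) ↔ (((σ⁻¹ v₂ : Fin k):ℕ) < p))) :
    ShP p (Equiv.swap v₁ v₂ * σ) := by
  set u := σ⁻¹ v₁ with hu
  set w := σ⁻¹ v₂ with hw
  have hsu : ((σ u : Fin k):ℕ) = (v₁:ℕ) := by rw [hu, Equiv.Perm.apply_inv_self]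
  have hsw : ((σ w : Fin k):ℕ) = (v₂:ℕ) := by rw [hw, Equiv.Perm.apply_inv_self]
  have hval : ∀ x, ((Equiv.swap v₁ v₂ * σ) x : ℕ) =
      if x = u then (v₂:ℕ) else if x = w then (v₁:ℕ) else ((σ x):ℕ) := swap_apply_val σ v₁ v₂
  have hne : ∀ x : Fin k, x ≠ u → ((σ x:Fin k):ℕ) ≠ (v₁:ℕ) := by
    intro x hx h
    exact hx (by rw [hu, ← Equiv.Perm.eq_inv_iff_eq.mpr (Fin.ext h)])
  have hne2 : ∀ x : Fin k, x ≠ w → ((σ x:Fin k):ℕ) ≠ (v₂:ℕ) := by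
    intro x hx h
    exact hx (by rw [hw, ← Equiv.Perm.eq_inv_iff_eq.mpr (Fin.ext h)])
  constructor
  · intro x y hx hy hxy
    rw [hval, hval]
    have hxyne : x ≠ y := by intro h; rw [h] at hxy; omega
    by_cases hxu : x = u
    · have hub : (u:ℕ) < p := by rw [← hxu]; exact hx
      have hwb : ¬ ((w:ℕ) < p) := by tauto
      have hyu : y ≠ u := by rw [← hxu]; exact hxyne.symm
      have hyw : y ≠ w := by intro h; rw [h] at hy; omega
      rw [if_pos hxu, if_neg hyu, if_neg hyw]
      have := hσ.1 x y hx hy hxy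
      rw [hxu, hsu] at this
      have := hne2 y hyw
      omega
    · by_cases hxw : x = w
      · have hwb : (w:ℕ) < p := by rw [← hxw]; exact hx
        have hub : ¬ ((u:ℕ) < p) := by tauto
        have hyu : y ≠ u := by intro h; rw [h] at hy; omega
        have hyw : y ≠ w := by rw [← hxw]; exact hxyne.symm
        rw [if_neg hxu, if_pos hxw, if_neg hyu, if_neg hyw]
        have := hσ.1 x y hx hy hxy
        rw [hxw, hsw] at this
        omega
      · rw [if_neg hxu, if_neg hxw]
        by_cases hyu : y = u
        · rw [if_pos hyu]
          have := hσ.1 x y hx hy hxy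
          rw [hyu, hsu] at this
          omega
        · by_cases hyw : y = w
          · rw [if_neg hyu, if_pos hyw]
            have := hσ.1 x y hx hy hxy
            rw [hyw, hsw] at this
            have := hne x hxu
            omega
          · rw [if_neg hyu, if_neg hyw]
            exact hσ.1 x y hx hy hxy
  · intro x y hx hy hxy
    rw [hval, hval]
    have hxyne : x ≠ y := by intro h; rw [h] at hxy; omega
    by_cases hxu : x = u
    · have hub : p ≤ (u:ℕ) := by rw [← hxu]; exact hx
      have hwb : (w:ℕ) < p := by by_contra hc; exact hmix (by omega)
      have hyu : y ≠ u := by rw [← hxu]; exact hxyne.symm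
      have hyw : y ≠ w := by intro h; rw [h] at hy; omega
      rw [if_pos hxu, if_neg hyu, if_neg hyw]
      have := hσ.2 x y hx hy hxy
      rw [hxu, hsu] at this
      have := hne2 y hyw
      omega
    · by_cases hxw : x = w
      · have hwb : p ≤ (w:ℕ) := by rw [← hxw]; exact hx
        have hub : (u:ℕ) < p := by by_contra hc; exact hmix (by omega)
        have hyu : y ≠ u := by intro h; rw [h] at hy; omega
        have hyw : y ≠ w := by rw [← hxw]; exact hxyne.symm
        rw [if_neg hxu, if_pos hxw, if_neg hyu, if_neg hyw]
        have := hσ.2 x y hx hy hxy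
        rw [hxw, hsw] at this
        omega
      · rw [if_neg hxu, if_neg hxw]
        by_cases hyu : y = u
        · rw [if_pos hyu]
          have := hσ.2 x y hx hy hxy
          rw [hyu, hsu] at this
          omega
        · by_cases hyw : y = w
          · rw [if_neg hyu, if_pos hyw]
            have := hσ.2 x y hx hy hxy
            rw [hyw, hsw] at this
            have := hne x hxu
            omega
          · rw [if_neg hyu, if_neg hyw]
            exact hσ.2 x y hx hy hxy

end Aux

section Alg

open Equiv

variable (F : Type*) [Field F] (A : Type*) [NonUnitalCommRing A] [Module F A]
  [SMulCommClass F A A] [IsScalarTower F A A]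

set_option linter.unusedSectionVars false

noncomputable def ιtp (n : ℕ) (w : Fin n → A) : ⨁ m : ℕ, ⨂[F] (_ : Fin m), A :=
  DirectSum.lof F ℕ (fun m => ⨂[F] (_ : Fin m), A) n (⨂ₜ[F] j, w j)

variable {F A}

theorem ιtp_congr {n : ℕ} {w w' : Fin n → A} (h : ∀ j, w j = w' j) :
    ιtp F A n w = ιtp F A n w' := by
  unfold ιtp; congr 1; exact MultilinearMap.congr_arg _ (funext h)

theorem ιtp_cast {m m' : ℕ} (h : m = m') (w : Fin m' → A) :
    ιtp F A m' w = ιtp F A m (w ∘ Fin.cast h) := by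
  subst h
  exact ιtp_congr (fun j => congrArg w (Fin.ext rfl))

theorem tt_add_self [CharP F 2] (x : ⨁ m : ℕ, ⨂[F] (_ : Fin m), A) : x + x = 0 := by
  have h2 : (2 : F) = 0 := by exact_mod_cast CharP.cast_eq_zero F 2
  calc x + x = (2:F) • x := (two_smul F x).symm
  _ = 0 := by rw [h2, zero_smul]

/-- interleaved word -/
def dword {A : Type*} (p q : ℕ) (a : Fin p → A) (b : Fin q → A) {m : ℕ} (hm : m = p + q) :
    Fin m → A :=
  fun z => if hz : (z:ℕ) < p then a ⟨z, hz⟩ else b ⟨(z:ℕ) - p, by omega⟩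

theorem append_val' {A : Type*} {p q : ℕ} (a : Fin p → A) (b : Fin q → A) (k : Fin (p+q)) :
    Fin.append a b k = if h : (k:ℕ) < p then a ⟨k, h⟩ else b ⟨(k:ℕ) - p, by omega⟩ := by
  rcases k with ⟨k, hk⟩
  by_cases h : k < p
  · rw [dif_pos h]
    exact Fin.append_left a b ⟨k, h⟩
  · rw [dif_neg h]
    have h2 := Fin.append_right a b ⟨k - p, by omega⟩
    have h3 : Fin.natAdd p (⟨k - p, by omega⟩ : Fin q) = (⟨k, hk⟩ : Fin (p+q)) := by
      simp [Fin.natAdd]; omega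
    rw [h3] at h2
    exact h2

theorem append_dword {A : Type*} {p q m : ℕ} (hm : m = p+q) (a : Fin p → A) (b : Fin q → A)
    (x : Fin (p+q)) (z : Fin m) (hxz : (x:ℕ) = (z:ℕ)) :
    Fin.append a b x = dword p q a b hm z := by
  rw [append_val', dword]
  split_ifs with h1 h2 h2
  · exact congrArg a (by simp only [Fin.mk.injEq]; omega)
  · omega
  · omega
  · exact congrArg b (by simp only [Fin.mk.injEq]; omega)

theorem dword_apply {A : Type*} {p q m : ℕ} (hm : m = p+q) (a : Fin p → A) (b : Fin q → A)
    (z : Fin m) :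
    dword p q a b hm z
      = if hz : (z:ℕ) < p then a ⟨z, hz⟩ else b ⟨(z:ℕ) - p, by omega⟩ := rfl

theorem mulAt_apply {A : Type*} [Mul A] {n : ℕ} (i : Fin n) (a : Fin (n + 1) → A) (j : Fin n) :
    mulAt i a j =
      if (j : ℕ) < (i : ℕ) then a ⟨(j:ℕ), by omega⟩
      else if (j : ℕ) = (i : ℕ) then a ⟨(i:ℕ), by omega⟩ * a ⟨(i:ℕ)+1, by omega⟩
      else a ⟨(j:ℕ)+1, by omega⟩ := rfl

theorem sum_filter_prod {α β M : Type*} [Fintype α] [Fintype β] [DecidableEq α] [DecidableEq β]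
    [AddCommMonoid M] (P : α → Prop) [DecidablePred P] (Q : α → β → Prop)
    [∀ a, DecidablePred (Q a)] (f : α × β → M) :
    ∑ x ∈ Finset.univ.filter (fun x : α × β => P x.1 ∧ Q x.1 x.2), f x
      = ∑ a ∈ Finset.univ.filter P, ∑ b ∈ Finset.univ.filter (fun b => Q a b), f (a, b) := by
  rw [Finset.sum_filter, Fintype.sum_prod_type, Finset.sum_filter]
  refine Finset.sum_congr rfl (fun a _ => ?_)
  rw [Finset.sum_filter]
  by_cases hP : P a
  · simp only [hP, true_and, if_true]
  · simp only [hP, false_and, if_false, if_neg hP, Finset.sum_const_zero]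

theorem sum_perm_congr {M : Type*} [AddCommMonoid M] {m k : ℕ} (h : m = k)
    (P : Equiv.Perm (Fin k) → Prop) [DecidablePred P] (f : Equiv.Perm (Fin k) → M) :
    ∑ σ ∈ Finset.univ.filter P, f σ
      = ∑ σ' ∈ Finset.univ.filter (fun σ' : Equiv.Perm (Fin m) => P (cperm h σ')),
          f (cperm h σ') := by
  classical
  refine Finset.sum_nbij' (fun σ => cperm h.symm σ) (fun σ' => cperm h σ') ?_ ?_ ?_ ?_ ?_
  · intro σ hσ
    simp only [Finset.mem_filter, Finset.mem_univ, true_and] at *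
    rwa [cperm_cperm']
  · intro σ' hσ'
    simp only [Finset.mem_filter, Finset.mem_univ, true_and] at *
    exact hσ'
  · intro σ _; exact cperm_cperm' h σ
  · intro σ' _; exact cperm_cperm h σ'
  · intro σ hσ; rw [cperm_cperm']

end Alg

theorem collapse_inv_char {n : ℕ} (w : Fin (n+1)) (σ : Equiv.Perm (Fin (n+1))) (m : Fin n) :
    w.succAbove ((collapsePerm w σ)⁻¹ m) = σ⁻¹ ((σ w).succAbove m) := by
  have h := collapsePerm_char w σ ((collapsePerm w σ)⁻¹ m)
  rw [Equiv.Perm.apply_inv_self] at h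
  have h2 := congrArg (⇑σ⁻¹) h
  rw [Equiv.Perm.inv_apply_self] at h2
  exact h2.symm

theorem inv_ne_of_ne {n : ℕ} (σ : Equiv.Perm (Fin (n+1))) {z z' : Fin (n+1)} (hzz : z ≠ z') :
    ((σ⁻¹ z : Fin (n+1)):ℕ) ≠ ((σ⁻¹ z' : Fin (n+1)):ℕ) :=
  fun hh => hzz (σ⁻¹.injective (Fin.ext hh))

theorem AA_adj {n p : ℕ} (σ : Equiv.Perm (Fin (n+1))) (i : Fin n) (hsh : ShP (p+1) σ)
    (hc1 : ((σ⁻¹ i.castSucc : Fin (n+1)):ℕ) < p+1)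
    (hc2 : ((σ⁻¹ i.succ : Fin (n+1)):ℕ) < p+1) :
    ((σ⁻¹ i.succ : Fin (n+1)):ℕ) = ((σ⁻¹ i.castSucc : Fin (n+1)):ℕ) + 1 :=
  adj_left σ hsh i.castSucc i.succ (by simp) hc1 hc2

theorem AA_u_lt {n p : ℕ} (σ : Equiv.Perm (Fin (n+1))) (i : Fin n) (hsh : ShP (p+1) σ)
    (hc1 : ((σ⁻¹ i.castSucc : Fin (n+1)):ℕ) < p+1)
    (hc2 : ((σ⁻¹ i.succ : Fin (n+1)):ℕ) < p+1) :
    ((σ⁻¹ i.castSucc : Fin (n+1)):ℕ) < p := by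
  have := AA_adj σ i hsh hc1 hc2
  omega

theorem castSucc_eq_succAbove {n : ℕ} (i : Fin n) (j : Fin n) (hj : (j:ℕ) ≤ (i:ℕ)) :
    j.castSucc = i.succ.succAbove j := by
  apply Fin.ext
  rw [succAbove_val]
  simp only [Fin.coe_castSucc, Fin.val_succ]
  split_ifs <;> omega

theorem succ_eq_succAbove {n : ℕ} (i : Fin n) (j : Fin n) (hj : (i:ℕ) < (j:ℕ)) :
    j.succ = i.succ.succAbove j := by
  apply Fin.ext
  rw [succAbove_val]
  simp only [Fin.val_succ]
  split_ifs <;> omega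

/-- the word identity for the AA bijection -/
theorem AA_word {A : Type*} [NonUnitalCommRing A] {p q n : ℕ}
    (h : n + 1 = (p+1) + q) (h2 : n = p + q)
    (a : Fin (p+1) → A) (b : Fin q → A) (σ : Equiv.Perm (Fin (n+1))) (i : Fin n)
    (hsh : ShP (p+1) σ)
    (hc1 : ((σ⁻¹ i.castSucc : Fin (n+1)):ℕ) < p+1)
    (hc2 : ((σ⁻¹ i.succ : Fin (n+1)):ℕ) < p+1)
    (hu : ((σ⁻¹ i.castSucc : Fin (n+1)):ℕ) < p) (j : Fin n) :
    mulAt i (dword (p+1) q a b h ∘ ⇑σ⁻¹) j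
      = dword p q (mulAt ⟨((σ⁻¹ i.castSucc : Fin (n+1)):ℕ), hu⟩ a) b h2
          ((collapsePerm (σ⁻¹ i.succ) σ)⁻¹ j) := by
  have hadj := AA_adj σ i hsh hc1 hc2
  set u : Fin (n+1) := σ⁻¹ i.castSucc with hudef
  set w : Fin (n+1) := σ⁻¹ i.succ with hwdef
  set τc := collapsePerm w σ with hτc
  have hσw : σ w = i.succ := Equiv.Perm.apply_inv_self σ _
  have hchar : ∀ m : Fin n, w.succAbove (τc⁻¹ m) = σ⁻¹ (i.succ.succAbove m) := by
    intro m
    have := collapse_inv_char w σ m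
    rwa [hσw] at this
  -- the generic entry identity
  have main : ∀ m : Fin n,
      ((σ⁻¹ (i.succ.succAbove m) : Fin (n+1)):ℕ) ≠ (u:ℕ) →
      ((σ⁻¹ (i.succ.succAbove m) : Fin (n+1)):ℕ) ≠ (w:ℕ) →
      dword (p+1) q a b h (σ⁻¹ (i.succ.succAbove m))
        = dword p q (mulAt ⟨(u:ℕ), hu⟩ a) b h2 (τc⁻¹ m) := by
    intro m hXu hXw
    have hv' := congrArg Fin.val (hchar m)
    rw [succAbove_val] at hv'
    rw [dword_apply, dword_apply]
    rcases lt_or_ge ((τc⁻¹ m : Fin n):ℕ) ((w : Fin (n+1)):ℕ) with hrw | hrw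
    · rw [if_pos hrw] at hv'
      -- X = r
      split_ifs with d1 d2 d2
      · rw [mulAt_apply]
        simp only [Fin.val_mk]
        split_ifs with e1 e2
        · exact congrArg a (by simp only [Fin.val_mk, Fin.mk.injEq]; omega)
        · exact (by omega : False).elim
        · exact (by omega : False).elim
      · exact (by omega : False).elim
      · exact (by omega : False).elim
      · exact congrArg b (by simp only [Fin.val_mk, Fin.mk.injEq]; omega)
    · rw [if_neg (not_lt.2 hrw)] at hv'
      -- X = r + 1
      split_ifs with d1 d2 d2
      · rw [mulAt_apply]
        simp only [Fin.val_mk]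
        split_ifs with e1 e2
        · exact (by omega : False).elim
        · exact (by omega : False).elim
        · exact congrArg a (by simp only [Fin.val_mk, Fin.mk.injEq]; omega)
      · exact (by omega : False).elim
      · exact (by omega : False).elim
      · exact congrArg b (by simp only [Fin.val_mk, Fin.mk.injEq]; omega)
  show (if (j:ℕ) < (i:ℕ) then (dword (p+1) q a b h ∘ ⇑σ⁻¹) j.castSucc
    else if (j:ℕ) = (i:ℕ) then
      (dword (p+1) q a b h ∘ ⇑σ⁻¹) i.castSucc * (dword (p+1) q a b h ∘ ⇑σ⁻¹) i.succ
    else (dword (p+1) q a b h ∘ ⇑σ⁻¹) j.succ) = _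
  rcases lt_trichotomy (j:ℕ) (i:ℕ) with hj | hj | hj
  · rw [if_pos hj]
    have hjc : j.castSucc = i.succ.succAbove j := castSucc_eq_succAbove i j (by omega)
    show dword (p+1) q a b h (σ⁻¹ j.castSucc) = _
    rw [hjc]
    refine main j ?_ ?_
    · exact inv_ne_of_ne σ (by
        rw [← hjc]
        intro hh
        have := congrArg Fin.val hh
        simp only [Fin.coe_castSucc] at this
        omega)
    · exact inv_ne_of_ne σ (by
        rw [← hjc]
        intro hh
        have := congrArg Fin.val hh
        simp only [Fin.coe_castSucc, Fin.val_succ] at this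
        omega)
  · rw [if_neg (by omega), if_pos hj]
    -- j = i : the product entry
    have hji : j = i := Fin.ext hj
    subst hji
    -- compute τc⁻¹ j
    have hcc : j.succ.succAbove j = j.castSucc := (castSucc_eq_succAbove j j le_rfl).symm
    have hr := congrArg Fin.val (hchar j)
    rw [hcc, succAbove_val] at hr
    -- hr : ite = (u : ℕ)
    have hrval : ((τc⁻¹ j : Fin n):ℕ) = (u:ℕ) := by
      split_ifs at hr with hh
      · exact hr
      · omega
    show dword (p+1) q a b h (σ⁻¹ j.castSucc) * dword (p+1) q a b h (σ⁻¹ j.succ) = _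
    rw [dword_apply, dword_apply, dword_apply]
    rw [dif_pos (show ((σ⁻¹ j.castSucc : Fin (n+1)):ℕ) < p+1 from hc1)]
    rw [dif_pos (show ((σ⁻¹ j.succ : Fin (n+1)):ℕ) < p+1 from hc2)]
    rw [dif_pos (show ((τc⁻¹ j : Fin n):ℕ) < p by omega)]
    rw [mulAt_apply]
    simp only [Fin.val_mk]
    rw [if_neg (by omega), if_pos (by omega)]
    congr 1
    exact congrArg a (by simp only [Fin.mk.injEq]; omega)
  · rw [if_neg (by omega), if_neg (by omega)]
    have hjc : j.succ = i.succ.succAbove j := succ_eq_succAbove i j (by omega)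
    show dword (p+1) q a b h (σ⁻¹ j.succ) = _
    rw [hjc]
    refine main j ?_ ?_
    · exact inv_ne_of_ne σ (by
        rw [← hjc]
        intro hh
        have := congrArg Fin.val hh
        simp only [Fin.coe_castSucc, Fin.val_succ] at this
        omega)
    · exact inv_ne_of_ne σ (by
        rw [← hjc]
        intro hh
        have := congrArg Fin.val hh
        simp only [Fin.val_succ] at this
        omega)

theorem sum_filter_prod2 {α β M : Type*} [Fintype α] [Fintype β] [DecidableEq α] [DecidableEq β]
    [AddCommMonoid M] (Q : β → Prop) [DecidablePred Q] (f : α × β → M) :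
    ∑ x ∈ Finset.univ.filter (fun x : α × β => Q x.2), f x
      = ∑ a : α, ∑ b ∈ Finset.univ.filter Q, f (a, b) := by
  rw [Finset.sum_filter, Fintype.sum_prod_type]
  refine Finset.sum_congr rfl (fun a _ => ?_)
  rw [Finset.sum_filter]

theorem psi_inv_castSucc {n : ℕ} (τ : Equiv.Perm (Fin n)) (i'' : Fin n) :
    (expandPerm i''.succ (τ i'').succ τ)⁻¹ (τ i'').castSucc = i''.castSucc := by
  rw [expandPerm_inv]
  rw [castSucc_eq_succAbove (τ i'') (τ i'') le_rfl, expandPerm_succAbove]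
  rw [Equiv.Perm.inv_apply_self]
  exact (castSucc_eq_succAbove i'' i'' le_rfl).symm

theorem psi_inv_succ {n : ℕ} (τ : Equiv.Perm (Fin n)) (i'' : Fin n) :
    (expandPerm i''.succ (τ i'').succ τ)⁻¹ (τ i'').succ = i''.succ := by
  rw [expandPerm_inv]; exact expandPerm_at _ _ _

theorem phi_tau_at_u {n p : ℕ} (σ : Equiv.Perm (Fin (n+1))) (i : Fin n) (hsh : ShP (p+1) σ)
    (hc1 : ((σ⁻¹ i.castSucc : Fin (n+1)):ℕ) < p+1)
    (hc2 : ((σ⁻¹ i.succ : Fin (n+1)):ℕ) < p+1)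
    (hlt : ((σ⁻¹ i.castSucc : Fin (n+1)):ℕ) < n) :
    collapsePerm (σ⁻¹ i.succ) σ ⟨((σ⁻¹ i.castSucc : Fin (n+1)):ℕ), hlt⟩ = i := by
  have hadj := AA_adj σ i hsh hc1 hc2
  have hchar := collapsePerm_char (σ⁻¹ i.succ) σ ⟨((σ⁻¹ i.castSucc : Fin (n+1)):ℕ), hlt⟩
  rw [Equiv.Perm.apply_inv_self] at hchar
  have h1 : (σ⁻¹ i.succ).succAbove ⟨((σ⁻¹ i.castSucc : Fin (n+1)):ℕ), hlt⟩
      = σ⁻¹ i.castSucc := by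
    apply Fin.ext
    rw [succAbove_val]
    simp only [Fin.val_mk]
    split_ifs <;> omega
  rw [h1, Equiv.Perm.apply_inv_self] at hchar
  apply Fin.ext
  have hval := congrArg Fin.val hchar
  rw [succAbove_val] at hval
  simp only [Fin.coe_castSucc, Fin.val_succ] at hval
  split_ifs at hval <;> omega

theorem AA_core2 (F : Type*) [Field F] (A : Type*) [NonUnitalCommRing A] [Module F A]
    [SMulCommClass F A A] [IsScalarTower F A A]
    (p q n : ℕ) (h : n + 1 = (p+1) + q) (h2 : n = p + q)
    (a : Fin (p+1) → A) (b : Fin q → A) :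
    ∑ σ ∈ Finset.univ.filter (fun σ : Equiv.Perm (Fin (n+1)) => ShP (p+1) σ),
      ∑ i ∈ Finset.univ.filter (fun i : Fin n =>
          ((σ⁻¹ i.castSucc : Fin (n+1)):ℕ) < p+1 ∧ ((σ⁻¹ i.succ : Fin (n+1)):ℕ) < p+1),
        ιtp F A n (mulAt i (dword (p+1) q a b h ∘ ⇑σ⁻¹))
    = ∑ i' : Fin p, ∑ τ ∈ Finset.univ.filter (fun τ : Equiv.Perm (Fin n) => ShP p τ),
        ιtp F A n (dword p q (mulAt i' a) b h2 ∘ ⇑τ⁻¹) := by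
  classical
  have hpn : p ≤ n := by omega
  rw [← sum_filter_prod (fun σ : Equiv.Perm (Fin (n+1)) => ShP (p+1) σ)
      (fun σ i => ((σ⁻¹ i.castSucc : Fin (n+1)):ℕ) < p+1 ∧ ((σ⁻¹ i.succ : Fin (n+1)):ℕ) < p+1)
      (fun x => ιtp F A n (mulAt x.2 (dword (p+1) q a b h ∘ ⇑x.1⁻¹)))]
  rw [← sum_filter_prod2 (fun τ : Equiv.Perm (Fin n) => ShP p τ)
      (fun y => ιtp F A n (dword p q (mulAt y.1 a) b h2 ∘ ⇑y.2⁻¹))]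
  refine Finset.sum_bij'
    (fun x hx => (⟨((x.1⁻¹ x.2.castSucc : Fin (n+1)):ℕ), by
        have hx' := (Finset.mem_filter.mp hx).2
        exact AA_u_lt x.1 x.2 hx'.1 hx'.2.1 hx'.2.2⟩,
      collapsePerm (x.1⁻¹ x.2.succ) x.1))
    (fun y hy => (expandPerm (⟨(y.1:ℕ), lt_of_lt_of_le y.1.isLt hpn⟩ : Fin n).succ
        ((y.2 (⟨(y.1:ℕ), lt_of_lt_of_le y.1.isLt hpn⟩ : Fin n)).succ) y.2,
      y.2 (⟨(y.1:ℕ), lt_of_lt_of_le y.1.isLt hpn⟩ : Fin n)))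
    ?_ ?_ ?_ ?_ ?_
  · -- forward map lands in target
    intro x hx
    simp only [Finset.mem_filter, Finset.mem_univ, true_and] at hx ⊢
    obtain ⟨hsh, hc1, hc2⟩ := hx
    have hadj := AA_adj x.1 x.2 hsh hc1 hc2
    exact collapse_ShP_left x.1 hsh _ (by omega)
  · -- backward map lands in source
    intro y hy
    simp only [Finset.mem_filter, Finset.mem_univ, true_and] at hy ⊢
    set i'' : Fin n := ⟨(y.1:ℕ), lt_of_lt_of_le y.1.isLt hpn⟩ with hi''
    refine ⟨expand_ShP_left y.2 hy i''.succ ((y.2 i'').succ) i'' y.1.isLt rfl rfl, ?_, ?_⟩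
    · rw [psi_inv_castSucc y.2 i'']
      simp only [Fin.coe_castSucc, hi'', Fin.val_mk]
      omega
    · rw [psi_inv_succ y.2 i'']
      simp only [Fin.val_succ, hi'', Fin.val_mk]
      omega
  · -- left inverse
    intro x hx
    simp only [Finset.mem_filter, Finset.mem_univ, true_and] at hx
    obtain ⟨hsh, hc1, hc2⟩ := hx
    have hadj := AA_adj x.1 x.2 hsh hc1 hc2
    have hlt : ((x.1⁻¹ x.2.castSucc : Fin (n+1)):ℕ) < n := by
      have := (x.1⁻¹ x.2.succ).isLt
      omega
    have hL1 : collapsePerm (x.1⁻¹ x.2.succ) x.1 ⟨((x.1⁻¹ x.2.castSucc : Fin (n+1)):ℕ), hlt⟩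
        = x.2 := phi_tau_at_u x.1 x.2 hsh hc1 hc2 hlt
    have hw : (⟨((x.1⁻¹ x.2.castSucc : Fin (n+1)):ℕ), hlt⟩ : Fin n).succ = x.1⁻¹ x.2.succ := by
      apply Fin.ext
      simp only [Fin.val_succ, Fin.val_mk]
      omega
    have hσw : x.1 (x.1⁻¹ x.2.succ) = x.2.succ := Equiv.Perm.apply_inv_self x.1 _
    have hmain : expandPerm
        ((⟨((x.1⁻¹ x.2.castSucc : Fin (n+1)):ℕ), hlt⟩ : Fin n).succ)
        ((collapsePerm (x.1⁻¹ x.2.succ) x.1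
          ⟨((x.1⁻¹ x.2.castSucc : Fin (n+1)):ℕ), hlt⟩).succ)
        (collapsePerm (x.1⁻¹ x.2.succ) x.1) = x.1 := by
      rw [hL1, hw]
      have hmain' := expandPerm_collapsePerm (x.1⁻¹ x.2.succ) x.1
      rwa [hσw] at hmain'
    exact Prod.ext hmain hL1
  · -- right inverse
    intro y hy
    simp only [Finset.mem_filter, Finset.mem_univ, true_and] at hy
    set i'' : Fin n := ⟨(y.1:ℕ), lt_of_lt_of_le y.1.isLt hpn⟩ with hi''
    have e1 := psi_inv_castSucc y.2 i''
    have e2 := psi_inv_succ y.2 i''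
    refine Prod.ext ?_ ?_
    · apply Fin.ext
      show ((expandPerm i''.succ ((y.2 i'').succ) y.2)⁻¹ ((y.2 i'').castSucc) : Fin (n+1)).val
        = (y.1:ℕ)
      rw [e1]
      simp only [Fin.coe_castSucc, hi'', Fin.val_mk]
    · show collapsePerm ((expandPerm i''.succ ((y.2 i'').succ) y.2)⁻¹ ((y.2 i'').succ))
        (expandPerm i''.succ ((y.2 i'').succ) y.2) = y.2
      rw [e2]
      exact collapsePerm_expandPerm _ _ _
  · -- the summands agree
    intro x hx
    simp only [Finset.mem_filter, Finset.mem_univ, true_and] at hx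
    obtain ⟨hsh, hc1, hc2⟩ := hx
    exact ιtp_congr (fun j =>
      AA_word h h2 a b x.1 x.2 hsh hc1 hc2 (AA_u_lt x.1 x.2 hsh hc1 hc2) j)

theorem BB_adj {n p : ℕ} (σ : Equiv.Perm (Fin (n+1))) (i : Fin n) (hsh : ShP p σ)
    (hc1 : p ≤ ((σ⁻¹ i.castSucc : Fin (n+1)):ℕ))
    (hc2 : p ≤ ((σ⁻¹ i.succ : Fin (n+1)):ℕ)) :
    ((σ⁻¹ i.succ : Fin (n+1)):ℕ) = ((σ⁻¹ i.castSucc : Fin (n+1)):ℕ) + 1 :=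
  adj_right σ hsh i.castSucc i.succ (by simp) hc1 hc2

theorem phi_tau_at' {n : ℕ} (σ : Equiv.Perm (Fin (n+1))) (i : Fin n)
    (hadj : ((σ⁻¹ i.succ : Fin (n+1)):ℕ) = ((σ⁻¹ i.castSucc : Fin (n+1)):ℕ) + 1)
    (k : Fin n) (hk : (k:ℕ) = ((σ⁻¹ i.castSucc : Fin (n+1)):ℕ)) :
    collapsePerm (σ⁻¹ i.succ) σ k = i := by
  have hchar := collapsePerm_char (σ⁻¹ i.succ) σ k
  rw [Equiv.Perm.apply_inv_self] at hchar
  have h1 : (σ⁻¹ i.succ).succAbove k = σ⁻¹ i.castSucc := by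
    apply Fin.ext
    rw [succAbove_val]
    split_ifs <;> omega
  rw [h1, Equiv.Perm.apply_inv_self] at hchar
  apply Fin.ext
  have hval := congrArg Fin.val hchar
  rw [succAbove_val] at hval
  simp only [Fin.coe_castSucc, Fin.val_succ] at hval
  split_ifs at hval <;> omega

/-- the word identity for the BB bijection -/
theorem BB_word {A : Type*} [NonUnitalCommRing A] {p q n : ℕ}
    (h : n + 1 = p + (q+1)) (h2 : n = p + q)
    (a : Fin p → A) (b : Fin (q+1) → A) (σ : Equiv.Perm (Fin (n+1))) (i : Fin n)
    (hsh : ShP p σ)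
    (hc1 : p ≤ ((σ⁻¹ i.castSucc : Fin (n+1)):ℕ))
    (hc2 : p ≤ ((σ⁻¹ i.succ : Fin (n+1)):ℕ))
    (huq : ((σ⁻¹ i.castSucc : Fin (n+1)):ℕ) - p < q) (j : Fin n) :
    mulAt i (dword p (q+1) a b h ∘ ⇑σ⁻¹) j
      = dword p q a (mulAt ⟨((σ⁻¹ i.castSucc : Fin (n+1)):ℕ) - p, huq⟩ b) h2
          ((collapsePerm (σ⁻¹ i.succ) σ)⁻¹ j) := by
  have hadj := BB_adj σ i hsh hc1 hc2
  set u : Fin (n+1) := σ⁻¹ i.castSucc with hudef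
  set w : Fin (n+1) := σ⁻¹ i.succ with hwdef
  set τc := collapsePerm w σ with hτc
  have hσw : σ w = i.succ := Equiv.Perm.apply_inv_self σ _
  have hchar : ∀ m : Fin n, w.succAbove (τc⁻¹ m) = σ⁻¹ (i.succ.succAbove m) := by
    intro m
    have := collapse_inv_char w σ m
    rwa [hσw] at this
  have main : ∀ m : Fin n,
      ((σ⁻¹ (i.succ.succAbove m) : Fin (n+1)):ℕ) ≠ (u:ℕ) →
      ((σ⁻¹ (i.succ.succAbove m) : Fin (n+1)):ℕ) ≠ (w:ℕ) →
      dword p (q+1) a b h (σ⁻¹ (i.succ.succAbove m))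
        = dword p q a (mulAt ⟨(u:ℕ) - p, huq⟩ b) h2 (τc⁻¹ m) := by
    intro m hXu hXw
    have hv' := congrArg Fin.val (hchar m)
    rw [succAbove_val] at hv'
    rw [dword_apply, dword_apply]
    rcases lt_or_ge ((τc⁻¹ m : Fin n):ℕ) ((w : Fin (n+1)):ℕ) with hrw | hrw
    · rw [if_pos hrw] at hv'
      -- X = r
      split_ifs with d1 d2 d2
      · exact congrArg a (by simp only [Fin.val_mk, Fin.mk.injEq]; omega)
      · exact (by omega : False).elim
      · exact (by omega : False).elim
      · rw [mulAt_apply]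
        simp only [Fin.val_mk]
        split_ifs with e1 e2
        · exact congrArg b (by simp only [Fin.val_mk, Fin.mk.injEq]; omega)
        · exact (by omega : False).elim
        · exact (by omega : False).elim
    · rw [if_neg (not_lt.2 hrw)] at hv'
      -- X = r + 1
      split_ifs with d1 d2 d2
      · exact (by omega : False).elim
      · exact (by omega : False).elim
      · exact (by omega : False).elim
      · rw [mulAt_apply]
        simp only [Fin.val_mk]
        split_ifs with e1 e2
        · exact (by omega : False).elim
        · exact (by omega : False).elim
        · exact congrArg b (by simp only [Fin.val_mk, Fin.mk.injEq]; omega)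
  show (if (j:ℕ) < (i:ℕ) then (dword p (q+1) a b h ∘ ⇑σ⁻¹) j.castSucc
    else if (j:ℕ) = (i:ℕ) then
      (dword p (q+1) a b h ∘ ⇑σ⁻¹) i.castSucc * (dword p (q+1) a b h ∘ ⇑σ⁻¹) i.succ
    else (dword p (q+1) a b h ∘ ⇑σ⁻¹) j.succ) = _
  rcases lt_trichotomy (j:ℕ) (i:ℕ) with hj | hj | hj
  · rw [if_pos hj]
    have hjc : j.castSucc = i.succ.succAbove j := castSucc_eq_succAbove i j (by omega)
    show dword p (q+1) a b h (σ⁻¹ j.castSucc) = _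
    rw [hjc]
    refine main j ?_ ?_
    · exact inv_ne_of_ne σ (by
        rw [← hjc]
        intro hh
        have := congrArg Fin.val hh
        simp only [Fin.coe_castSucc] at this
        omega)
    · exact inv_ne_of_ne σ (by
        rw [← hjc]
        intro hh
        have := congrArg Fin.val hh
        simp only [Fin.coe_castSucc, Fin.val_succ] at this
        omega)
  · rw [if_neg (by omega), if_pos hj]
    have hji : j = i := Fin.ext hj
    subst hji
    have hcc : j.succ.succAbove j = j.castSucc := (castSucc_eq_succAbove j j le_rfl).symm
    have hr := congrArg Fin.val (hchar j)
    rw [hcc, succAbove_val] at hr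
    have hrval : ((τc⁻¹ j : Fin n):ℕ) = (u:ℕ) := by
      split_ifs at hr with hh
      · exact hr
      · omega
    show dword p (q+1) a b h (σ⁻¹ j.castSucc) * dword p (q+1) a b h (σ⁻¹ j.succ) = _
    rw [dword_apply, dword_apply, dword_apply]
    rw [dif_neg (show ¬ ((σ⁻¹ j.castSucc : Fin (n+1)):ℕ) < p from not_lt.2 hc1)]
    rw [dif_neg (show ¬ ((σ⁻¹ j.succ : Fin (n+1)):ℕ) < p from not_lt.2 hc2)]
    rw [dif_neg (show ¬ ((τc⁻¹ j : Fin n):ℕ) < p by omega)]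
    rw [mulAt_apply]
    simp only [Fin.val_mk]
    rw [if_neg (by omega), if_pos (by omega)]
    congr 1
    exact congrArg b (by simp only [Fin.mk.injEq]; omega)
  · rw [if_neg (by omega), if_neg (by omega)]
    have hjc : j.succ = i.succ.succAbove j := succ_eq_succAbove i j (by omega)
    show dword p (q+1) a b h (σ⁻¹ j.succ) = _
    rw [hjc]
    refine main j ?_ ?_
    · exact inv_ne_of_ne σ (by
        rw [← hjc]
        intro hh
        have := congrArg Fin.val hh
        simp only [Fin.coe_castSucc, Fin.val_succ] at this
        omega)
    · exact inv_ne_of_ne σ (by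
        rw [← hjc]
        intro hh
        have := congrArg Fin.val hh
        simp only [Fin.val_succ] at this
        omega)

theorem BB_u_bound {n p q : ℕ} (h2 : n = p + q) (σ : Equiv.Perm (Fin (n+1))) (i : Fin n)
    (hsh : ShP p σ)
    (hc1 : p ≤ ((σ⁻¹ i.castSucc : Fin (n+1)):ℕ))
    (hc2 : p ≤ ((σ⁻¹ i.succ : Fin (n+1)):ℕ)) :
    ((σ⁻¹ i.castSucc : Fin (n+1)):ℕ) - p < q := by
  have hadj := BB_adj σ i hsh hc1 hc2
  have := (σ⁻¹ i.succ).isLt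
  omega

theorem BB_core2 (F : Type*) [Field F] (A : Type*) [NonUnitalCommRing A] [Module F A]
    [SMulCommClass F A A] [IsScalarTower F A A]
    (p q n : ℕ) (h : n + 1 = p + (q+1)) (h2 : n = p + q)
    (a : Fin p → A) (b : Fin (q+1) → A) :
    ∑ σ ∈ Finset.univ.filter (fun σ : Equiv.Perm (Fin (n+1)) => ShP p σ),
      ∑ i ∈ Finset.univ.filter (fun i : Fin n =>
          p ≤ ((σ⁻¹ i.castSucc : Fin (n+1)):ℕ) ∧ p ≤ ((σ⁻¹ i.succ : Fin (n+1)):ℕ)),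
        ιtp F A n (mulAt i (dword p (q+1) a b h ∘ ⇑σ⁻¹))
    = ∑ j' : Fin q, ∑ τ ∈ Finset.univ.filter (fun τ : Equiv.Perm (Fin n) => ShP p τ),
        ιtp F A n (dword p q a (mulAt j' b) h2 ∘ ⇑τ⁻¹) := by
  classical
  have hqn : ∀ y' : Fin q, p + (y':ℕ) < n := by intro y'; omega
  rw [← sum_filter_prod (fun σ : Equiv.Perm (Fin (n+1)) => ShP p σ)
      (fun σ i => p ≤ ((σ⁻¹ i.castSucc : Fin (n+1)):ℕ) ∧ p ≤ ((σ⁻¹ i.succ : Fin (n+1)):ℕ))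
      (fun x => ιtp F A n (mulAt x.2 (dword p (q+1) a b h ∘ ⇑x.1⁻¹)))]
  rw [← sum_filter_prod2 (fun τ : Equiv.Perm (Fin n) => ShP p τ)
      (fun y => ιtp F A n (dword p q a (mulAt y.1 b) h2 ∘ ⇑y.2⁻¹))]
  refine Finset.sum_bij'
    (fun x hx => (⟨((x.1⁻¹ x.2.castSucc : Fin (n+1)):ℕ) - p, by
        have hx' := (Finset.mem_filter.mp hx).2
        exact BB_u_bound h2 x.1 x.2 hx'.1 hx'.2.1 hx'.2.2⟩,
      collapsePerm (x.1⁻¹ x.2.succ) x.1))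
    (fun y hy => (expandPerm (⟨p + (y.1:ℕ), hqn y.1⟩ : Fin n).succ
        ((y.2 (⟨p + (y.1:ℕ), hqn y.1⟩ : Fin n)).succ) y.2,
      y.2 (⟨p + (y.1:ℕ), hqn y.1⟩ : Fin n)))
    ?_ ?_ ?_ ?_ ?_
  · intro x hx
    simp only [Finset.mem_filter, Finset.mem_univ, true_and] at hx ⊢
    obtain ⟨hsh, hc1, hc2⟩ := hx
    exact collapse_ShP_right x.1 hsh _ (by omega)
  · intro y hy
    simp only [Finset.mem_filter, Finset.mem_univ, true_and] at hy ⊢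
    set i'' : Fin n := ⟨p + (y.1:ℕ), hqn y.1⟩ with hi''
    refine ⟨expand_ShP_right y.2 hy i''.succ ((y.2 i'').succ) i''
      (by simp only [hi'', Fin.val_mk]; omega) rfl rfl, ?_, ?_⟩
    · rw [psi_inv_castSucc y.2 i'']
      simp only [Fin.coe_castSucc, hi'', Fin.val_mk]
      omega
    · rw [psi_inv_succ y.2 i'']
      simp only [Fin.val_succ, hi'', Fin.val_mk]
      omega
  · intro x hx
    simp only [Finset.mem_filter, Finset.mem_univ, true_and] at hx
    obtain ⟨hsh, hc1, hc2⟩ := hx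
    have hadj := BB_adj x.1 x.2 hsh hc1 hc2
    have hlt : p + (((x.1⁻¹ x.2.castSucc : Fin (n+1)):ℕ) - p) < n := by
      have := (x.1⁻¹ x.2.succ).isLt
      omega
    have hL1 : collapsePerm (x.1⁻¹ x.2.succ) x.1
        ⟨p + (((x.1⁻¹ x.2.castSucc : Fin (n+1)):ℕ) - p), hlt⟩ = x.2 :=
      phi_tau_at' x.1 x.2 hadj _ (by simp only [Fin.val_mk]; omega)
    have hw : (⟨p + (((x.1⁻¹ x.2.castSucc : Fin (n+1)):ℕ) - p), hlt⟩ : Fin n).succ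
        = x.1⁻¹ x.2.succ := by
      apply Fin.ext
      simp only [Fin.val_succ, Fin.val_mk]
      omega
    have hσw : x.1 (x.1⁻¹ x.2.succ) = x.2.succ := Equiv.Perm.apply_inv_self x.1 _
    have hmain : expandPerm
        ((⟨p + ((((⟨((x.1⁻¹ x.2.castSucc : Fin (n+1)):ℕ) - p, by
            have hx' := (Finset.mem_filter.mp hx).2
            exact BB_u_bound h2 x.1 x.2 hsh hc1 hc2⟩ : Fin q)):ℕ)), hqn _⟩ : Fin n).succ)
        ((collapsePerm (x.1⁻¹ x.2.succ) x.1
          ⟨p + ((((⟨((x.1⁻¹ x.2.castSucc : Fin (n+1)):ℕ) - p, by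
            have hx' := (Finset.mem_filter.mp hx).2
            exact BB_u_bound h2 x.1 x.2 hsh hc1 hc2⟩ : Fin q)):ℕ)), hqn _⟩).succ)
        (collapsePerm (x.1⁻¹ x.2.succ) x.1) = x.1 := by
      have hEq : (⟨p + ((((⟨((x.1⁻¹ x.2.castSucc : Fin (n+1)):ℕ) - p, by
            have hx' := (Finset.mem_filter.mp hx).2
            exact BB_u_bound h2 x.1 x.2 hsh hc1 hc2⟩ : Fin q)):ℕ)), hqn _⟩ : Fin n)
          = ⟨p + (((x.1⁻¹ x.2.castSucc : Fin (n+1)):ℕ) - p), hlt⟩ := by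
        simp only [Fin.mk.injEq, Fin.val_mk]
      rw [hEq, hL1, hw]
      have hmain' := expandPerm_collapsePerm (x.1⁻¹ x.2.succ) x.1
      rwa [hσw] at hmain'
    have hL1' : collapsePerm (x.1⁻¹ x.2.succ) x.1
        ⟨p + ((((⟨((x.1⁻¹ x.2.castSucc : Fin (n+1)):ℕ) - p, by
            have hx' := (Finset.mem_filter.mp hx).2
            exact BB_u_bound h2 x.1 x.2 hsh hc1 hc2⟩ : Fin q)):ℕ)), hqn _⟩ = x.2 :=
      phi_tau_at' x.1 x.2 hadj _ (by simp only [Fin.val_mk]; omega)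
    exact Prod.ext hmain hL1'
  · intro y hy
    simp only [Finset.mem_filter, Finset.mem_univ, true_and] at hy
    set i'' : Fin n := ⟨p + (y.1:ℕ), hqn y.1⟩ with hi''
    have e1 := psi_inv_castSucc y.2 i''
    have e2 := psi_inv_succ y.2 i''
    refine Prod.ext ?_ ?_
    · apply Fin.ext
      show (((expandPerm i''.succ ((y.2 i'').succ) y.2)⁻¹ ((y.2 i'').castSucc) : Fin (n+1)).val
        - p : ℕ) = (y.1:ℕ)
      rw [e1]
      simp only [Fin.coe_castSucc, hi'', Fin.val_mk]
      omega
    · show collapsePerm ((expandPerm i''.succ ((y.2 i'').succ) y.2)⁻¹ ((y.2 i'').succ))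
        (expandPerm i''.succ ((y.2 i'').succ) y.2) = y.2
      rw [e2]
      exact collapsePerm_expandPerm _ _ _
  · intro x hx
    simp only [Finset.mem_filter, Finset.mem_univ, true_and] at hx
    obtain ⟨hsh, hc1, hc2⟩ := hx
    exact ιtp_congr (fun j =>
      BB_word h h2 a b x.1 x.2 hsh hc1 hc2 (BB_u_bound h2 x.1 x.2 hsh hc1 hc2) j)

theorem MIX_core' (F : Type*) [Field F] (A : Type*) [NonUnitalCommRing A] [Module F A]
  [SMulCommClass F A A] [IsScalarTower F A A] [CharP F 2] (p n : ℕ) (d : Fin (n+1) → A) :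
    ∑ σ ∈ Finset.univ.filter (fun σ : Equiv.Perm (Fin (n+1)) => ShP p σ),
      ∑ i ∈ Finset.univ.filter (fun i : Fin n =>
          ¬(((σ⁻¹ i.castSucc : Fin (n+1)):ℕ) < p ∧ ((σ⁻¹ i.succ : Fin (n+1)):ℕ) < p) ∧
          ¬(p ≤ ((σ⁻¹ i.castSucc : Fin (n+1)):ℕ) ∧ p ≤ ((σ⁻¹ i.succ : Fin (n+1)):ℕ))),
        ιtp F A n (mulAt i (d ∘ ⇑σ⁻¹)) = 0 := by
  classical
  rw [← sum_filter_prod (fun σ : Equiv.Perm (Fin (n+1)) => ShP p σ)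
    (fun σ i => ¬(((σ⁻¹ i.castSucc : Fin (n+1)):ℕ) < p ∧ ((σ⁻¹ i.succ : Fin (n+1)):ℕ) < p) ∧
          ¬(p ≤ ((σ⁻¹ i.castSucc : Fin (n+1)):ℕ) ∧ p ≤ ((σ⁻¹ i.succ : Fin (n+1)):ℕ)))
    (fun x => ιtp F A n (mulAt x.2 (d ∘ ⇑x.1⁻¹)))]
  have hword : ∀ (σ : Equiv.Perm (Fin (n+1))) (i : Fin n) (j : Fin n),
      mulAt i (d ∘ ⇑(Equiv.swap i.castSucc i.succ * σ)⁻¹) j = mulAt i (d ∘ ⇑σ⁻¹) j := by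
    intro σ i j
    have hinv : (Equiv.swap i.castSucc i.succ * σ)⁻¹ = σ⁻¹ * Equiv.swap i.castSucc i.succ := by
      rw [mul_inv_rev, Equiv.swap_inv]
    unfold mulAt
    simp only [hinv, Function.comp_apply, Equiv.Perm.mul_apply]
    split_ifs with hlt heq
    · rw [Equiv.swap_apply_of_ne_of_ne
        (by intro hh; have := congrArg Fin.val hh; simp at this; omega)
        (by intro hh; have := congrArg Fin.val hh; simp at this; omega)]
    · rw [Equiv.swap_apply_left, Equiv.swap_apply_right, mul_comm]
    · rw [Equiv.swap_apply_of_ne_of_ne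
        (by intro hh; have := congrArg Fin.val hh; simp at this; omega)
        (by intro hh; have := congrArg Fin.val hh; simp at this; omega)]
  have hinv' : ∀ (σ : Equiv.Perm (Fin (n+1))) (i : Fin n),
      (Equiv.swap i.castSucc i.succ * σ)⁻¹ = σ⁻¹ * Equiv.swap i.castSucc i.succ := by
    intro σ i
    rw [mul_inv_rev, Equiv.swap_inv]
  refine Finset.sum_involution
    (fun x _ => (Equiv.swap x.2.castSucc x.2.succ * x.1, x.2)) ?_ ?_ ?_ ?_
  · -- terms cancel
    intro x hx
    have : ιtp F A n (mulAt x.2 (d ∘ ⇑(Equiv.swap x.2.castSucc x.2.succ * x.1)⁻¹))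
        = ιtp F A n (mulAt x.2 (d ∘ ⇑x.1⁻¹)) := ιtp_congr (hword x.1 x.2)
    show ιtp F A n _ + ιtp F A n _ = 0
    rw [this]
    exact tt_add_self _
  · -- no fixed points
    intro x hx _
    intro hEq
    have h1 : Equiv.swap x.2.castSucc x.2.succ * x.1 = x.1 := (Prod.ext_iff.mp hEq).1
    have h2 := congrArg (fun ρ : Equiv.Perm (Fin (n+1)) => ρ (x.1⁻¹ x.2.castSucc)) h1
    simp only [Equiv.Perm.mul_apply, Equiv.Perm.apply_inv_self] at h2
    rw [Equiv.swap_apply_left] at h2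
    have := congrArg Fin.val h2
    simp at this
  · -- closed under the involution
    intro x hx
    simp only [Finset.mem_filter, Finset.mem_univ, true_and] at hx ⊢
    obtain ⟨hsh, hcond⟩ := hx
    have hc1 : (Equiv.swap x.2.castSucc x.2.succ * x.1)⁻¹ x.2.castSucc = x.1⁻¹ x.2.succ := by
      rw [hinv' x.1 x.2, Equiv.Perm.mul_apply, Equiv.swap_apply_left]
    have hc2 : (Equiv.swap x.2.castSucc x.2.succ * x.1)⁻¹ x.2.succ = x.1⁻¹ x.2.castSucc := by
      rw [hinv' x.1 x.2, Equiv.Perm.mul_apply, Equiv.swap_apply_right]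
    constructor
    · refine swap_ShP x.1 hsh _ _ (by simp) ?_
      obtain ⟨hm1, hm2⟩ := hcond
      omega
    · rw [hc1, hc2]
      obtain ⟨hm1, hm2⟩ := hcond
      omega
  · -- involutive
    intro x hx
    show (Equiv.swap x.2.castSucc x.2.succ * (Equiv.swap x.2.castSucc x.2.succ * x.1), x.2) = x
    rw [← mul_assoc, Equiv.swap_mul_self, one_mul]

/-- Over a field `F` of characteristic `2`, for a (possibly nonunital) commutative associative
`F`-algebra `A`, the bar differential `b'` on `T(A) = ⨁ₙ A^{⊗n}` is a derivation with respect
to the shuffle product: `b'(x · y) = b'(x) · y + x · b'(y)`.  Consequently the bar construction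
of a commutative algebra, with the shuffle product, is a commutative differential graded
algebra. -/
theorem bar_differential_is_derivation_for_shuffle
    (F : Type*) [Field F] [CharP F 2]
    (A : Type*) [NonUnitalCommRing A] [Module F A] [SMulCommClass F A A] [IsScalarTower F A A]
    (B : (⨁ n : ℕ, ⨂[F] (_ : Fin n), A) →ₗ[F] ⨁ n : ℕ, ⨂[F] (_ : Fin n), A)
    (hB0 : ∀ x, B (DirectSum.lof F ℕ (fun m => ⨂[F] (_ : Fin m), A) 0 x) = 0)
    (hB : ∀ (n : ℕ) (a : Fin (n + 1) → A),
      B (DirectSum.lof F ℕ (fun m => ⨂[F] (_ : Fin m), A) (n + 1) (⨂ₜ[F] j, a j)) =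
        ∑ i : Fin n, DirectSum.lof F ℕ (fun m => ⨂[F] (_ : Fin m), A) n (⨂ₜ[F] j, mulAt i a j))
    (mul : (⨁ n : ℕ, ⨂[F] (_ : Fin n), A) →ₗ[F]
      (⨁ n : ℕ, ⨂[F] (_ : Fin n), A) →ₗ[F] (⨁ n : ℕ, ⨂[F] (_ : Fin n), A))
    (hmul : ∀ (p q : ℕ) (a : Fin p → A) (b : Fin q → A),
      mul (DirectSum.lof F ℕ (fun m => ⨂[F] (_ : Fin m), A) p (⨂ₜ[F] k, a k))
          (DirectSum.lof F ℕ (fun m => ⨂[F] (_ : Fin m), A) q (⨂ₜ[F] k, b k)) =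
        ∑ σ ∈ Finset.univ.filter (fun σ => IsShuffle p q σ),
          DirectSum.lof F ℕ (fun m => ⨂[F] (_ : Fin m), A) (p + q)
            (⨂ₜ[F] k, Fin.append a b (σ⁻¹ k))) :
    ∀ x y, B (mul x y) = mul (B x) y + mul x (B y) := by
  classical
  have hB0' : ∀ (w : Fin 0 → A), B (ιtp F A 0 w) = 0 := fun w => hB0 _
  have hB' : ∀ (n : ℕ) (w : Fin (n+1) → A),
      B (ιtp F A (n+1) w) = ∑ i : Fin n, ιtp F A n (mulAt i w) := fun n w => hB n w
  have hmul' : ∀ (p q : ℕ) (a : Fin p → A) (b : Fin q → A),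
      mul (ιtp F A p a) (ιtp F A q b) =
        ∑ σ ∈ Finset.univ.filter (fun σ => IsShuffle p q σ),
          ιtp F A (p+q) (Fin.append a b ∘ ⇑σ⁻¹) := fun p q a b => hmul p q a b
  -- the multiplication expressed at an arbitrary (equal) ambient length
  have hcore : ∀ (p q m : ℕ) (hm : m = p + q) (a : Fin p → A) (b : Fin q → A),
      mul (ιtp F A p a) (ιtp F A q b)
        = ∑ σ ∈ Finset.univ.filter (fun σ : Equiv.Perm (Fin m) => ShP p σ),
            ιtp F A m (dword p q a b hm ∘ ⇑σ⁻¹) := by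
    intro p q m hm a b
    rw [hmul' p q a b]
    rw [sum_perm_congr hm (fun σ => IsShuffle p q σ)
      (fun σ => ιtp F A (p+q) (Fin.append a b ∘ ⇑σ⁻¹))]
    have hfil : Finset.univ.filter (fun σ' : Equiv.Perm (Fin m) => IsShuffle p q (cperm hm σ'))
        = Finset.univ.filter (fun σ' : Equiv.Perm (Fin m) => ShP p σ') := by
      ext σ'
      simp only [Finset.mem_filter, Finset.mem_univ, true_and]
      rw [isShuffle_iff_ShP, cperm_ShP_iff]
    rw [hfil]
    refine Finset.sum_congr rfl (fun σ' _ => ?_)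
    rw [ιtp_cast hm]
    refine ιtp_congr (fun j => ?_)
    refine append_dword hm a b _ _ ?_
    show (((cperm hm σ')⁻¹ : Equiv.Perm (Fin (p+q))) (Fin.cast hm j) : ℕ) = ((σ'⁻¹ j : Fin m) : ℕ)
    rw [cperm_inv, cperm_val]
    exact congrArg (fun z => ((σ'⁻¹ z : Fin m) : ℕ)) (Fin.ext rfl)
  -- the key pointwise identity
  have key : ∀ (p q : ℕ) (a : Fin p → A) (b : Fin q → A),
      B (mul (ιtp F A p a) (ιtp F A q b))
        = mul (B (ιtp F A p a)) (ιtp F A q b) + mul (ιtp F A p a) (B (ιtp F A q b)) := by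
    intro p q a b
    by_cases h0 : p + q = 0
    · -- degenerate case p = q = 0
      have hp : p = 0 := by omega
      have hq : q = 0 := by omega
      subst hp; subst hq
      have hz : (mul (B (ιtp F A 0 a))) (ιtp F A 0 b) + (mul (ιtp F A 0 a)) (B (ιtp F A 0 b))
          = 0 := by
        rw [hB0' a, hB0' b, map_zero, LinearMap.zero_apply, map_zero, add_zero]
      rw [hmul' 0 0 a b, map_sum, hz]
      exact Finset.sum_eq_zero (fun σ _ => hB0 _)
    · obtain ⟨n, hn⟩ : ∃ n, n + 1 = p + q := ⟨p + q - 1, by omega⟩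
      -- expand the left-hand side
      have e1 : B (mul (ιtp F A p a) (ιtp F A q b))
          = ∑ σ ∈ Finset.univ.filter (fun σ : Equiv.Perm (Fin (n+1)) => ShP p σ),
              ∑ i : Fin n, ιtp F A n (mulAt i (dword p q a b hn ∘ ⇑σ⁻¹)) := by
        rw [hcore p q (n+1) hn a b, map_sum]
        exact Finset.sum_congr rfl (fun σ _ => hB' n _)
      -- split each inner sum into three classes
      have hsplit : ∀ (σ : Equiv.Perm (Fin (n+1))) (f : Fin n → (⨁ m : ℕ, ⨂[F] (_ : Fin m), A)),
          ∑ i : Fin n, f i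
            = (∑ i ∈ Finset.univ.filter (fun i : Fin n =>
                ((σ⁻¹ i.castSucc : Fin (n+1)):ℕ) < p ∧ ((σ⁻¹ i.succ : Fin (n+1)):ℕ) < p), f i)
            + (∑ i ∈ Finset.univ.filter (fun i : Fin n =>
                p ≤ ((σ⁻¹ i.castSucc : Fin (n+1)):ℕ) ∧ p ≤ ((σ⁻¹ i.succ : Fin (n+1)):ℕ)), f i)
            + (∑ i ∈ Finset.univ.filter (fun i : Fin n =>
                ¬(((σ⁻¹ i.castSucc : Fin (n+1)):ℕ) < p ∧ ((σ⁻¹ i.succ : Fin (n+1)):ℕ) < p) ∧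
                ¬(p ≤ ((σ⁻¹ i.castSucc : Fin (n+1)):ℕ) ∧ p ≤ ((σ⁻¹ i.succ : Fin (n+1)):ℕ))), f i) := by
        intro σ f
        set C1 : Fin n → Prop := fun i =>
          ((σ⁻¹ i.castSucc : Fin (n+1)):ℕ) < p ∧ ((σ⁻¹ i.succ : Fin (n+1)):ℕ) < p with hC1
        set C2 : Fin n → Prop := fun i =>
          p ≤ ((σ⁻¹ i.castSucc : Fin (n+1)):ℕ) ∧ p ≤ ((σ⁻¹ i.succ : Fin (n+1)):ℕ) with hC2
        have h1 := Finset.sum_filter_add_sum_filter_not Finset.univ C1 f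
        have h2 := Finset.sum_filter_add_sum_filter_not
          (Finset.univ.filter (fun i => ¬ C1 i)) C2 f
        rw [Finset.filter_filter, Finset.filter_filter] at h2
        have h3 : Finset.univ.filter (fun i : Fin n => ¬ C1 i ∧ C2 i)
            = Finset.univ.filter (fun i : Fin n => C2 i) := by
          ext i
          simp only [Finset.mem_filter, Finset.mem_univ, true_and]
          constructor
          · exact fun hh => hh.2
          · intro hh
            refine ⟨?_, hh⟩
            rw [hC1]
            simp only []
            intro hc
            obtain ⟨hh1, _⟩ := hh
            omega
        rw [h3] at h2
        have h4 : Finset.univ.filter (fun i : Fin n => ¬ C1 i ∧ ¬ C2 i)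
            = Finset.univ.filter (fun i : Fin n => ¬ C1 i ∧ ¬ C2 i) := rfl
        calc ∑ i : Fin n, f i
            = (∑ i ∈ Finset.univ.filter C1, f i)
              + (∑ i ∈ Finset.univ.filter (fun i => ¬ C1 i), f i) := h1.symm
          _ = (∑ i ∈ Finset.univ.filter C1, f i)
              + ((∑ i ∈ Finset.univ.filter C2, f i)
                + (∑ i ∈ Finset.univ.filter (fun i => ¬ C1 i ∧ ¬ C2 i), f i)) := by rw [← h2]
          _ = _ := by rw [← add_assoc]
      -- rewrite the LHS as three sums
      rw [e1]
      have e2 : ∀ σ : Equiv.Perm (Fin (n+1)),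
          ∑ i : Fin n, ιtp F A n (mulAt i (dword p q a b hn ∘ ⇑σ⁻¹))
            = _ := fun σ => hsplit σ (fun i => ιtp F A n (mulAt i (dword p q a b hn ∘ ⇑σ⁻¹)))
      rw [Finset.sum_congr rfl (fun σ _ => e2 σ)]
      rw [Finset.sum_add_distrib, Finset.sum_add_distrib]
      -- the mixed part vanishes
      rw [MIX_core' F A p n (dword p q a b hn), add_zero]
      -- identify the two remaining parts
      have eAA : ∑ σ ∈ Finset.univ.filter (fun σ : Equiv.Perm (Fin (n+1)) => ShP p σ),
            ∑ i ∈ Finset.univ.filter (fun i : Fin n =>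
              ((σ⁻¹ i.castSucc : Fin (n+1)):ℕ) < p ∧ ((σ⁻¹ i.succ : Fin (n+1)):ℕ) < p),
              ιtp F A n (mulAt i (dword p q a b hn ∘ ⇑σ⁻¹))
          = mul (B (ιtp F A p a)) (ιtp F A q b) := by
        rcases p with _ | p'
        · rw [hB0' a, map_zero, LinearMap.zero_apply]
          refine Finset.sum_eq_zero (fun σ _ => ?_)
          rw [Finset.filter_false_of_mem, Finset.sum_empty]
          intro i _
          simp only [not_and]
          intro hc
          omega
        · have h2 : n = p' + q := by omega
          rw [AA_core2 F A p' q n hn h2 a b]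
          rw [hB' p' a, map_sum, LinearMap.sum_apply]
          exact Finset.sum_congr rfl (fun i' _ => (hcore p' q n h2 (mulAt i' a) b).symm)
      have eBB : ∑ σ ∈ Finset.univ.filter (fun σ : Equiv.Perm (Fin (n+1)) => ShP p σ),
            ∑ i ∈ Finset.univ.filter (fun i : Fin n =>
              p ≤ ((σ⁻¹ i.castSucc : Fin (n+1)):ℕ) ∧ p ≤ ((σ⁻¹ i.succ : Fin (n+1)):ℕ)),
              ιtp F A n (mulAt i (dword p q a b hn ∘ ⇑σ⁻¹))
          = mul (ιtp F A p a) (B (ιtp F A q b)) := by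
        rcases q with _ | q'
        · rw [hB0' b, map_zero]
          refine Finset.sum_eq_zero (fun σ _ => ?_)
          rw [Finset.filter_false_of_mem, Finset.sum_empty]
          intro i _
          simp only [not_and]
          intro hc1 hc2
          have hb1 : ((σ⁻¹ i.succ : Fin (n+1)):ℕ) < n + 1 := (σ⁻¹ i.succ).isLt
          omega
        · have h2 : n = p + q' := by omega
          rw [BB_core2 F A p q' n hn h2 a b]
          rw [hB' q' b, map_sum]
          exact Finset.sum_congr rfl (fun j' _ => (hcore p q' n h2 a (mulAt j' b)).symm)
      rw [eAA, eBB]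
  -- reduce the general statement to pure tensors
  have key2 : ∀ x (q : ℕ) (b : Fin q → A),
      B (mul x (ιtp F A q b)) = mul (B x) (ιtp F A q b) + mul x (B (ιtp F A q b)) := by
    intro x q b
    induction x using DirectSum.induction_on with
    | zero => simp
    | of p t =>
      induction t using PiTensorProduct.induction_on with
      | smul_tprod r f =>
        have hof : DirectSum.of (fun m => ⨂[F] (_ : Fin m), A) p (r • PiTensorProduct.tprod F f)
            = r • ιtp F A p f := by
          rw [← DirectSum.lof_eq_of F]
          rw [map_smul]
          rfl
        rw [hof]
        simp only [map_smul, LinearMap.smul_apply, smul_add]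
        rw [key p q f b, smul_add]
      | add t1 t2 h1 h2 =>
        rw [map_add]
        simp only [map_add, LinearMap.add_apply]
        rw [h1, h2]
        abel
    | add x1 x2 h1 h2 =>
      simp only [map_add, LinearMap.add_apply]
      rw [h1, h2]
      abel
  intro x y
  induction y using DirectSum.induction_on with
  | zero => simp
  | of q t =>
    induction t using PiTensorProduct.induction_on with
    | smul_tprod r f =>
      have hof : DirectSum.of (fun m => ⨂[F] (_ : Fin m), A) q (r • PiTensorProduct.tprod F f)
          = r • ιtp F A q f := by
        rw [← DirectSum.lof_eq_of F]
        rw [map_smul]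
        rfl
      rw [hof]
      simp only [map_smul, smul_add]
      rw [key2 x q f, smul_add]
    | add t1 t2 h1 h2 =>
      rw [map_add]
      simp only [map_add, LinearMap.add_apply]
      rw [h1, h2]
      abel
  | add y1 y2 h1 h2 =>
    simp only [map_add, LinearMap.add_apply]
    rw [h1, h2]
    abel
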